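/- Let λ₁ ≥ λ₂ ≥ ⋯ ≥ λ_d > 0 with sum S and product P, and let 1 ≤ k ≤ l ≤ d−2. Then ( (d−k+1) · P · (k/S)^k )^((l−k+1)/(d−k)) ≤ λ_k λ_{k+1} ⋯ λ_l. -/

import Mathlib

open Finset Real

/-! Write `T = λ_k ⋯ λ_d` and `σ = λ_k + ⋯ + λ_d`. AM-GM for the `k` numbers
`λ_1, …, λ_{k-1}, σ` gives `P σ ≤ T (S/k)^k`, and AM-GM for the tail gives
`T ≤ (σ/(d-k+1))^(d-k+1)`; together `((d-k+1) P (k/S)^k)^(d-k+1) ≤ T^(d-k)`.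
Since the `λ_i` decrease, the geometric mean of the initial block `λ_k, …, λ_l` of the tail
dominates that of the whole tail: `T^(l-k+1) ≤ (λ_k ⋯ λ_l)^(d-k+1)`. -/

theorem Real.prod_le_sum_div_card_pow {ι : Type*} (s : Finset ι) (f : ι → ℝ)
    (hf : ∀ i ∈ s, 0 ≤ f i) : ∏ i ∈ s, f i ≤ ((∑ i ∈ s, f i) / #s) ^ #s := by
  rcases s.eq_empty_or_nonempty with rfl | hs
  · simp
  have hcard : (0 : ℝ) < #s := by exact_mod_cast hs.card_pos
  have amgm := geom_mean_le_arith_mean s (fun _ ↦ 1) f (fun _ _ ↦ zero_le_one)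
    (by simpa using hcard) hf
  simp only [rpow_one, one_mul, sum_const, nsmul_eq_mul, mul_one] at amgm
  calc ∏ i ∈ s, f i = ((∏ i ∈ s, f i) ^ ((#s : ℝ)⁻¹)) ^ #s :=
        (rpow_inv_natCast_pow (prod_nonneg hf) hs.card_pos.ne').symm
    _ ≤ ((∑ i ∈ s, f i) / #s) ^ #s := pow_le_pow_left₀ (rpow_nonneg (prod_nonneg hf) _) amgm _

theorem Real.prod_range_mul_le_sum_add_div_pow (n : ℕ) (f : ℕ → ℝ) (y : ℝ)
    (hf : ∀ i < n, 0 ≤ f i) (hy : 0 ≤ y) :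
    (∏ i ∈ range n, f i) * y ≤ ((∑ i ∈ range n, f i + y) / (n + 1)) ^ (n + 1) := by
  have hupdate : ∀ i ∈ range n, Function.update f n y i = f i := fun i hi ↦
    Function.update_of_ne (mem_range.mp hi).ne _ _
  have := prod_le_sum_div_card_pow (range (n + 1)) (Function.update f n y) fun i hi ↦ by
    rcases (mem_range_succ_iff.mp hi).lt_or_eq with hi | rfl
    · rw [Function.update_of_ne hi.ne]; exact hf i hi
    · rwa [Function.update_self]
  rwa [prod_range_succ, sum_range_succ, prod_congr rfl hupdate, sum_congr rfl hupdate,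
    Function.update_self, card_range, Nat.cast_succ] at this

theorem Finset.prod_pow_card_le_prod_pow_card {ι R : Type*} [CommMonoidWithZero R] [Preorder R]
    [ZeroLEOneClass R] [PosMulMono R] {I J : Finset ι} {f : ι → R}
    (hJ : ∀ j ∈ J, 0 ≤ f j) (hle : ∀ i ∈ I, ∀ j ∈ J, f j ≤ f i) :
    (∏ j ∈ J, f j) ^ #I ≤ (∏ i ∈ I, f i) ^ #J := by
  calc (∏ j ∈ J, f j) ^ #I = ∏ j ∈ J, ∏ _i ∈ I, f j := by simp only [prod_const, prod_pow]
    _ ≤ ∏ _j ∈ J, ∏ i ∈ I, f i :=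
        prod_le_prod (fun j hj ↦ prod_nonneg fun _ _ ↦ hJ j hj)
          fun j hj ↦ prod_le_prod (fun _ _ ↦ hJ j hj) fun i hi ↦ hle i hi j hj
    _ = (∏ i ∈ I, f i) ^ #J := prod_const _

theorem Finset.prod_Ico_pow_le_prod_Ico_pow {R : Type*} [CommMonoidWithZero R] [Preorder R]
    [ZeroLEOneClass R] [PosMulMono R] {f : ℕ → R} {a b c : ℕ}
    (hf : AntitoneOn f (Set.Ico a b)) (hf₀ : ∀ i ∈ Ico a b, 0 ≤ f i) (hac : a ≤ c) (hcb : c ≤ b) :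
    (∏ i ∈ Ico a b, f i) ^ (c - a) ≤ (∏ i ∈ Ico a c, f i) ^ (b - a) := by
  have htail := prod_pow_card_le_prod_pow_card (I := Ico a c) (J := Ico c b) (f := f)
    (fun j hj ↦ hf₀ j (Ico_subset_Ico_left hac hj)) fun i hi j hj ↦ by
      rw [mem_Ico] at hi hj
      exact hf ⟨hi.1, by omega⟩ ⟨by omega, hj.2⟩ (by omega)
  rw [Nat.card_Ico, Nat.card_Ico] at htail
  rw [← prod_Ico_consecutive f hac hcb, mul_pow, show b - a = (c - a) + (b - c) by omega, pow_add]
  exact mul_le_mul_of_nonneg_left htail (pow_nonneg (prod_nonneg fun i hi ↦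
    hf₀ i (Ico_subset_Ico_right hcb hi)) _)

theorem Real.pow_card_mul_prod_mul_div_sum_pow_le (f : ℕ → ℝ) {d j : ℕ} (hf : ∀ i < d, 0 < f i)
    (hj : j < d) :
    ((d - j : ℕ) * (∏ i ∈ range d, f i) * ((j + 1 : ℕ) / ∑ i ∈ range d, f i) ^ (j + 1)) ^ (d - j)
      ≤ (∏ i ∈ Ico j d, f i) ^ (d - j - 1) := by
  set L := ∏ i ∈ range j, f i
  set T := ∏ i ∈ Ico j d, f i
  set σ := ∑ i ∈ Ico j d, f i
  obtain ⟨n, hn⟩ : ∃ n, d - j = n + 1 := ⟨d - j - 1, by omega⟩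
  rw [hn, Nat.add_sub_cancel, ← prod_range_mul_prod_Ico f hj.le,
    ← sum_range_add_sum_Ico f hj.le]
  have hL : 0 < L := prod_pos fun i hi ↦ hf i (by grind)
  have hT : 0 < T := prod_pos fun i hi ↦ hf i (mem_Ico.mp hi).2
  have hσ : 0 < σ := sum_pos (fun i hi ↦ hf i (mem_Ico.mp hi).2) ⟨j, by simpa using hj⟩
  have hhead : L * σ ≤ ((∑ i ∈ range j, f i + σ) / (j + 1)) ^ (j + 1) :=
    prod_range_mul_le_sum_add_div_pow j f σ (fun i hi ↦ (hf i (by omega)).le) hσ.le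
  have htail : T ≤ (σ / (n + 1)) ^ (n + 1) := by
    simpa [T, σ, hn] using
      prod_le_sum_div_card_pow (Ico j d) f fun i hi ↦ (hf i (mem_Ico.mp hi).2).le
  set S := ∑ i ∈ range j, f i + σ
  have hS : 0 < S := add_pos_of_nonneg_of_pos (sum_nonneg fun i hi ↦ (hf i (by grind)).le) hσ
  have hX : ((n + 1 : ℕ) : ℝ) * (L * T) * (((j + 1 : ℕ) : ℝ) / S) ^ (j + 1) ≤ (n + 1) * T / σ :=
    calc ((n + 1 : ℕ) : ℝ) * (L * T) * (((j + 1 : ℕ) : ℝ) / S) ^ (j + 1)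
        = (n + 1) * T * (L / (S / (j + 1)) ^ (j + 1)) := by
          rw [← inv_div, inv_pow]; push_cast; ring
      _ ≤ (n + 1) * T * (L / (L * σ)) := by gcongr
      _ = (n + 1) * T / σ := by field_simp
  calc (((n + 1 : ℕ) : ℝ) * (L * T) * (((j + 1 : ℕ) : ℝ) / S) ^ (j + 1)) ^ (n + 1)
      ≤ ((n + 1) * T / σ) ^ (n + 1) := pow_le_pow_left₀ (by positivity) hX _
    _ = T ^ n * (T / (σ / (n + 1)) ^ (n + 1)) := by
        rw [div_pow, div_pow, mul_pow, pow_succ T]; field_simp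
    _ ≤ T ^ n := mul_le_of_le_one_right (by positivity) ((div_le_one (by positivity)).mpr htail)

theorem Real.rpow_natCast_div_le_of_pow_le_pow {x a : ℝ} {p q : ℕ} (hx : 0 ≤ x) (ha : 0 ≤ a)
    (hq : q ≠ 0) (h : x ^ p ≤ a ^ q) : x ^ ((p : ℝ) / q) ≤ a :=
  calc x ^ ((p : ℝ) / q) = (x ^ p) ^ ((q : ℝ)⁻¹) := by
        rw [div_eq_mul_inv, rpow_mul hx, rpow_natCast]
    _ ≤ (a ^ q) ^ ((q : ℝ)⁻¹) := rpow_le_rpow (pow_nonneg hx _) h (by positivity)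
    _ = a := pow_rpow_inv_natCast ha hq

theorem stmt9_general (d : ℕ) (lam : ℕ → ℝ)
    (hmono : ∀ i j, i ≤ j → j < d → lam j ≤ lam i)
    (hpos : ∀ i, i < d → 0 < lam i)
    (S P : ℝ) (hS : S = ∑ i ∈ Finset.range d, lam i)
    (hP : P = ∏ i ∈ Finset.range d, lam i)
    (k l : ℕ) (hk1 : 1 ≤ k) (hkl : k ≤ l) (hl : l ≤ d - 2) :
    (((d : ℝ) - k + 1) * P * ((k : ℝ) / S) ^ k) ^ (((l : ℝ) - k + 1) / ((d : ℝ) - k)) ≤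
      ∏ i ∈ Finset.Ico (k - 1) l, lam i := by
  obtain ⟨j, rfl⟩ : ∃ j, k = j + 1 := ⟨k - 1, by omega⟩
  rw [show (d : ℝ) - (j + 1 : ℕ) + 1 = (d - j : ℕ) by
      push_cast [Nat.cast_sub (by omega : j ≤ d)]; ring,
    show (l : ℝ) - (j + 1 : ℕ) + 1 = (l - j : ℕ) by
      push_cast [Nat.cast_sub (by omega : j ≤ l)]; ring,
    show (d : ℝ) - (j + 1 : ℕ) = (d - j - 1 : ℕ) by rw [Nat.sub_sub, Nat.cast_sub (by omega)],
    Nat.add_sub_cancel]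
  have hS₀ : 0 < S := hS ▸ sum_pos (fun i hi ↦ hpos i (mem_range.mp hi)) ⟨0, mem_range.mpr (by omega)⟩
  have hP₀ : 0 < P := hP ▸ prod_pos fun i hi ↦ hpos i (mem_range.mp hi)
  set X := ((d - j : ℕ) : ℝ) * P * (((j + 1 : ℕ) : ℝ) / S) ^ (j + 1)
  set T := ∏ i ∈ Ico j d, lam i
  set A := ∏ i ∈ Ico j l, lam i
  have hT₀ : 0 ≤ T := prod_nonneg fun i hi ↦ (hpos i (mem_Ico.mp hi).2).le
  have hA₀ : 0 ≤ A := prod_nonneg fun i hi ↦ (hpos i (by grind)).le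
  have hX : X ^ (d - j) ≤ T ^ (d - j - 1) := by
    simpa only [← hS, ← hP] using pow_card_mul_prod_mul_div_sum_pow_le lam hpos (by omega : j < d)
  have hT : T ^ (l - j) ≤ A ^ (d - j) := prod_Ico_pow_le_prod_Ico_pow
    (fun i _ i' hi' hii' ↦ hmono i i' hii' hi'.2) (fun i hi ↦ (hpos i (mem_Ico.mp hi).2).le)
    (by omega) (by omega)
  refine rpow_natCast_div_le_of_pow_le_pow (by positivity) hA₀ (by omega) ?_
  rw [← pow_le_pow_iff_left₀ (by positivity) (by positivity) (by omega : d - j ≠ 0)]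
  calc (X ^ (l - j)) ^ (d - j) = (X ^ (d - j)) ^ (l - j) := pow_right_comm ..
    _ ≤ (T ^ (d - j - 1)) ^ (l - j) := pow_le_pow_left₀ (by positivity) hX _
    _ = (T ^ (l - j)) ^ (d - j - 1) := pow_right_comm ..
    _ ≤ (A ^ (d - j)) ^ (d - j - 1) := pow_le_pow_left₀ (by positivity) hT _
    _ = (A ^ (d - j - 1)) ^ (d - j) := pow_right_comm ..

theorem stmt9 (d : ℕ) (hd : 0 < d) (lam : ℕ → ℝ)
    (hmono : ∀ i j, i ≤ j → j < d → lam j ≤ lam i)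
    (hpos : ∀ i, i < d → 0 < lam i)
    (S P : ℝ) (hS : S = ∑ i ∈ Finset.range d, lam i)
    (hP : P = ∏ i ∈ Finset.range d, lam i)
    (k l : ℕ) (hk1 : 1 ≤ k) (hkl : k ≤ l) (hl : l ≤ d - 2) :
    (((d : ℝ) - k + 1) * P * ((k : ℝ) / S) ^ k) ^ (((l : ℝ) - k + 1) / ((d : ℝ) - k)) ≤
      ∏ i ∈ Finset.Ico (k - 1) l, lam i :=
  stmt9_general d lam hmono hpos S P hS hP k l hk1 hkl hl
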